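/- Let (n_i) be a sequence of positive integers and 1 < p_i < q_i < 2 with sup_i n_i^{1/p_i − 1/q_i} < ∞. Then all of the continuum-many spaces (Σ_i ⊕ ℓ_{r_i}^{n_i})_2 with r_i ∈ {p_i, q_i} are mutually isomorphic, so the uniform homeomorphism relation on this class is trivial (all spaces equivalent) and hence smooth. -/

import Mathlib

/-! For `a ≤ b` the formal identity `ℓ_a^m → ℓ_b^m` has norm at most `1`, and by Hölder's
inequality its inverse has norm at most `m^(1/a - 1/b)`. For `a, b ∈ {p_i, q_i}` and `m = n_i`
these norms are bounded uniformly in `i` by hypothesis, so the coordinatewise identities assemble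
into a bounded isomorphism of the `ℓ₂`-sums, which is in particular a uniform homeomorphism. -/

/-- The finite-dimensional space `ℓ_r^n` (`ℝ^n` with the `r`-norm). -/
noncomputable def lqn (r : ℝ) (hr : 1 ≤ r) (n : ℕ) : Type :=
  PiLp (ENNReal.ofReal r) (fun _ : Fin n => ℝ)

noncomputable instance (r : ℝ) (hr : 1 ≤ r) (n : ℕ) : NormedAddCommGroup (lqn r hr n) :=
  haveI : Fact (1 ≤ ENNReal.ofReal r) :=
    ⟨by simpa [ENNReal.ofReal_one] using ENNReal.ofReal_le_ofReal hr⟩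
  inferInstanceAs (NormedAddCommGroup (PiLp (ENNReal.ofReal r) (fun _ : Fin n => ℝ)))

noncomputable instance (r : ℝ) (hr : 1 ≤ r) (n : ℕ) : NormedSpace ℝ (lqn r hr n) :=
  haveI : Fact (1 ≤ ENNReal.ofReal r) :=
    ⟨by simpa [ENNReal.ofReal_one] using ENNReal.ofReal_le_ofReal hr⟩
  inferInstanceAs (NormedSpace ℝ (PiLp (ENNReal.ofReal r) (fun _ : Fin n => ℝ)))

open scoped NNReal ENNReal

namespace NNReal

theorem rpow_sum_le_sum_rpow {ι : Type*} (s : Finset ι) (f : ι → ℝ≥0) {t : ℝ}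
    (ht : 0 < t) (ht1 : t ≤ 1) : (∑ i ∈ s, f i) ^ t ≤ ∑ i ∈ s, f i ^ t := by
  classical
  induction s using Finset.induction_on with
  | empty => simp [zero_rpow ht.ne']
  | insert a s ha ih =>
    rw [Finset.sum_insert ha, Finset.sum_insert ha]
    exact (rpow_add_le_add_rpow _ _ ht.le ht1).trans (add_le_add_right ih _)

variable {ι : Type*} [Fintype ι] (f : ι → ℝ≥0) {p q : ℝ}

theorem Lp_le_Lp_of_le (hp : 0 < p) (hpq : p ≤ q) :
    (∑ i, f i ^ q) ^ (1 / q) ≤ (∑ i, f i ^ p) ^ (1 / p) := by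
  have hq : 0 < q := hp.trans_le hpq
  have h := rpow_sum_le_sum_rpow Finset.univ (fun i => f i ^ q) (div_pos hp hq)
    ((div_le_one hq).2 hpq)
  simp only [← rpow_mul, mul_div_cancel₀ _ hq.ne'] at h
  calc (∑ i, f i ^ q) ^ (1 / q) = ((∑ i, f i ^ q) ^ (p / q)) ^ (1 / p) := by
        rw [← rpow_mul]; field_simp
    _ ≤ (∑ i, f i ^ p) ^ (1 / p) := by gcongr

theorem Lp_le_card_rpow_mul_Lp (hp : 0 < p) (hpq : p ≤ q) :
    (∑ i, f i ^ p) ^ (1 / p) ≤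
      (Fintype.card ι : ℝ≥0) ^ (1 / p - 1 / q) * (∑ i, f i ^ q) ^ (1 / q) := by
  have hq : 0 < q := hp.trans_le hpq
  have h := rpow_sum_le_const_mul_sum_rpow Finset.univ (fun i => f i ^ p)
    ((one_le_div hp).2 hpq)
  simp only [← rpow_mul, mul_div_cancel₀ _ hp.ne', Finset.card_univ] at h
  calc (∑ i, f i ^ p) ^ (1 / p) = ((∑ i, f i ^ p) ^ (q / p)) ^ (1 / q) := by
        rw [← rpow_mul]; field_simp
    _ ≤ ((Fintype.card ι : ℝ≥0) ^ (q / p - 1) * ∑ i, f i ^ q) ^ (1 / q) := by gcongr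
    _ = (Fintype.card ι : ℝ≥0) ^ (1 / p - 1 / q) * (∑ i, f i ^ q) ^ (1 / q) := by
        rw [mul_rpow, ← rpow_mul]; congr 2; field_simp

end NNReal

namespace PiLp

noncomputable def changeExponent {ι : Type*} (p q : ℝ≥0∞) (𝕜 : Type*) (β : ι → Type*)
    [Semiring 𝕜] [∀ i, AddCommGroup (β i)] [∀ i, Module 𝕜 (β i)]
    [∀ i, TopologicalSpace (β i)] :
    PiLp p β ≃L[𝕜] PiLp q β :=
  (continuousLinearEquiv p 𝕜 β).trans (continuousLinearEquiv q 𝕜 β).symm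

variable {ι : Type*} [Fintype ι] {β : ι → Type*} [∀ i, SeminormedAddCommGroup (β i)]
  {p q : ℝ≥0∞}

theorem norm_eq_coe_sum_nnnorm (hp : 0 < p.toReal) (x : PiLp p β) :
    ‖x‖ = ((∑ i, ‖x i‖₊ ^ p.toReal) ^ (1 / p.toReal) : ℝ≥0) := by
  rw [norm_eq_sum hp]; push_cast; rfl

theorem norm_toLp_ofLp_le_of_le (hp : p ≠ 0) (hq : q ≠ ∞) (hpq : p ≤ q) (x : PiLp p β) :
    ‖WithLp.toLp q (WithLp.ofLp x)‖ ≤ ‖x‖ := by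
  have hp' : 0 < p.toReal := ENNReal.toReal_pos hp (ne_top_of_le_ne_top hq hpq)
  rw [norm_eq_coe_sum_nnnorm (hp'.trans_le (ENNReal.toReal_mono hq hpq)),
    norm_eq_coe_sum_nnnorm hp', NNReal.coe_le_coe]
  exact NNReal.Lp_le_Lp_of_le (fun i => ‖x i‖₊) hp' (ENNReal.toReal_mono hq hpq)

theorem norm_toLp_ofLp_le_card_rpow_mul (hp : p ≠ 0) (hq : q ≠ ∞) (hpq : p ≤ q)
    (x : PiLp q β) :
    ‖WithLp.toLp p (WithLp.ofLp x)‖ ≤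
      (Fintype.card ι : ℝ) ^ (1 / p.toReal - 1 / q.toReal) * ‖x‖ := by
  have hp' : 0 < p.toReal := ENNReal.toReal_pos hp (ne_top_of_le_ne_top hq hpq)
  rw [norm_eq_coe_sum_nnnorm hp',
    norm_eq_coe_sum_nnnorm (hp'.trans_le (ENNReal.toReal_mono hq hpq)),
    ← NNReal.coe_natCast, ← NNReal.coe_rpow, ← NNReal.coe_mul, NNReal.coe_le_coe]
  exact NNReal.Lp_le_card_rpow_mul_Lp (fun i => ‖x i‖₊) hp' (ENNReal.toReal_mono hq hpq)

end PiLp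

noncomputable def lqn.changeExponent {a b : ℝ} (ha : 1 ≤ a) (hb : 1 ≤ b) (m : ℕ) :
    lqn a ha m ≃L[ℝ] lqn b hb m :=
  PiLp.changeExponent _ _ ℝ _

theorem lqn.norm_changeExponent_le {p q a b : ℝ} (hpq : p ≤ q) (ha : 1 ≤ a) (hb : 1 ≤ b)
    (hap : a = p ∨ a = q) (hbp : b = p ∨ b = q) (m : ℕ) :
    ‖(lqn.changeExponent ha hb m : lqn a ha m →L[ℝ] lqn b hb m)‖ ≤
      max 1 ((m : ℝ) ^ (1 / p - 1 / q)) := by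
  refine ContinuousLinearMap.opNorm_le_bound _ (zero_le_one.trans (le_max_left _ _)) fun x => ?_
  have hofReal : ∀ {c : ℝ}, 1 ≤ c → ENNReal.ofReal c ≠ 0 := fun hc =>
    ENNReal.ofReal_pos.2 (zero_lt_one.trans_le hc) |>.ne'
  rcases le_or_gt a b with hab | hba
  · calc ‖_‖ ≤ ‖x‖ := PiLp.norm_toLp_ofLp_le_of_le (hofReal ha) ENNReal.ofReal_ne_top
          (ENNReal.ofReal_le_ofReal hab) x
      _ ≤ _ := le_mul_of_one_le_left (norm_nonneg x) (le_max_left _ _)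
  · obtain ⟨rfl, rfl⟩ : b = p ∧ a = q := by
      rcases hap with rfl | rfl <;> rcases hbp with rfl | rfl <;> constructor <;> linarith
    have := PiLp.norm_toLp_ofLp_le_card_rpow_mul (hofReal hb) ENNReal.ofReal_ne_top
          (ENNReal.ofReal_le_ofReal hba.le) x
    rw [ENNReal.toReal_ofReal (by linarith), ENNReal.toReal_ofReal (by linarith),
      Fintype.card_fin] at this
    exact this.trans (mul_le_mul_of_nonneg_right (le_max_right _ _) (norm_nonneg x))

namespace lp

variable {α 𝕜 : Type*} {E F : α → Type*} [NontriviallyNormedField 𝕜]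
  [∀ i, NormedAddCommGroup (E i)] [∀ i, NormedSpace 𝕜 (E i)]
  [∀ i, NormedAddCommGroup (F i)] [∀ i, NormedSpace 𝕜 (F i)]

noncomputable def mapCLE (p : ℝ≥0∞) [Fact (1 ≤ p)] (e : ∀ i, E i ≃L[𝕜] F i)
    {K K' : ℝ} (hK : 0 ≤ K) (hK' : 0 ≤ K')
    (he : ∀ i, ‖(e i : E i →L[𝕜] F i)‖ ≤ K)
    (he' : ∀ i, ‖((e i).symm : F i →L[𝕜] E i)‖ ≤ K') :
    lp E p ≃L[𝕜] lp F p :=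
  .equivOfInverse (mapCLM p (fun i => e i) hK he) (mapCLM p (fun i => (e i).symm) hK' he')
    (fun x => by ext i; simp) (fun y => by ext i; simp)

end lp

/-- If `1 < p_i < q_i < 2`, `n_i ≥ 1` and `sup_i n_i^{1/p_i − 1/q_i} < ∞`, then any two
of the spaces `(Σ_i ⊕ ℓ_{r_i}^{n_i})_2` with `r_i ∈ {p_i, q_i}` are isomorphic (in
particular uniformly homeomorphic), so the uniform homeomorphism relation on this
class is trivial and hence smooth. -/
theorem sums_mutually_isomorphic
    (p q : ℕ → ℝ) (n : ℕ → ℕ)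
    (hpq : ∀ i, 1 < p i ∧ p i < q i ∧ q i < 2)
    (hsup : ∃ C : ℝ, ∀ i, (n i : ℝ) ^ (1 / p i - 1 / q i) ≤ C)
    (r r' : ℕ → ℝ)
    (hr : ∀ i, r i = p i ∨ r i = q i) (hr' : ∀ i, r' i = p i ∨ r' i = q i) :
    ∃ T : lp (fun i => lqn (r i)
          (by rcases hr i with h | h <;> rw [h] <;>
              [exact (hpq i).1.le; exact ((hpq i).1.trans (hpq i).2.1).le]) (n i)) 2 ≃L[ℝ]
        lp (fun i => lqn (r' i)
          (by rcases hr' i with h | h <;> rw [h] <;>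
              [exact (hpq i).1.le; exact ((hpq i).1.trans (hpq i).2.1).le]) (n i)) 2,
      UniformContinuous T ∧ UniformContinuous T.symm := by
  obtain ⟨C, hC⟩ := hsup
  have hK : ∀ i {a b : ℝ} (ha : 1 ≤ a) (hb : 1 ≤ b), (a = p i ∨ a = q i) →
      (b = p i ∨ b = q i) →
        ‖(lqn.changeExponent ha hb (n i) : lqn a ha (n i) →L[ℝ] lqn b hb (n i))‖ ≤
          max 1 C :=
    fun i _ _ ha hb hap hbp => (lqn.norm_changeExponent_le (hpq i).2.1.le ha hb hap hbp
      (n i)).trans (max_le_max le_rfl (hC i))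
  have hK0 : 0 ≤ max 1 C := zero_le_one.trans (le_max_left 1 C)
  exact ⟨lp.mapCLE 2 (fun i => lqn.changeExponent _ _ (n i)) hK0 hK0
    (fun i => hK i _ _ (hr i) (hr' i)) (fun i => hK i _ _ (hr' i) (hr i)),
    uniformContinuous_addMonoidHom_of_continuous (map_continuous _),
    uniformContinuous_addMonoidHom_of_continuous (map_continuous _)⟩
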